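/- arXiv:1201.2499 — 2 statements merged into one kernel-verified Lean document; each statement's English description precedes it below -/
import Mathlib

section
/- Let T be a triangulated category, let X and Y be thick subcategories of T, assume that the subcategory of extensions X * Y is a triangulated subcategory of T, and let Q : T → T/(X ∩ Y) be the Verdier quotient functor. Then Hom_{T/(X ∩ Y)}(Q(x), Q(y)) = 0 for every x ∈ X and y ∈ Y. -/
/-!
Write a morphism `Q x ⟶ Q y` as a right fraction `x ← x' → y` whose denominator has its cone
in `X ∩ Y`; then `x' ∈ X`, so it suffices to show `Q a = 0` for every `a : x ⟶ y` with `x ∈ X`,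
`y ∈ Y`. The cone `c` of `a` sits in a triangle `y → c → x⟦1⟧`, so it lies in the triangulated
subcategory `X * Y`; choose a triangle `x₁ → c → y₁` with `x₁ ∈ X`, `y₁ ∈ Y`. By the octahedral
axiom the cone of the composite `b : y ⟶ c ⟶ y₁` sits in a triangle `x⟦1⟧ → _ → x₁⟦1⟧`, hence
lies in `X`; it lies in `Y` because `y, y₁ ∈ Y`. Thus `Q b` is invertible, and `a ≫ b = 0` forces
`Q a = 0`.
-/

namespace Paper

open CategoryTheory Limits Triangulated Pretriangulated ZeroObject

universe w v u

variable {C : Type u} [Category.{v} C] [HasZeroObject C] [Preadditive C] [HasShift C ℤ]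
  [∀ n : ℤ, (shiftFunctor C n).Additive] [Pretriangulated C]

/-- The subcategory of extensions `X * Y`: objects `e` admitting a distinguished triangle
`x ⟶ e ⟶ y ⟶ x⟦1⟧` with `x ∈ X` and `y ∈ Y`. -/
def star (X Y : Set C) : Set C :=
  {e | ∃ (x y : C) (_ : x ∈ X) (_ : y ∈ Y) (f : x ⟶ e) (g : e ⟶ y) (h : y ⟶ x⟦(1 : ℤ)⟧),
    Triangle.mk f g h ∈ distTriang C}

/-- A (strictly full) triangulated subcategory: a class of objects containing `0`, closed
under isomorphisms, suspension, desuspension and extensions. -/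
structure IsTriangulatedSubcat (S : Set C) : Prop where
  zero_mem : (0 : C) ∈ S
  mem_of_iso : ∀ {a b : C}, (a ≅ b) → a ∈ S → b ∈ S
  shift_mem : ∀ {a : C}, a ∈ S → a⟦(1 : ℤ)⟧ ∈ S
  unshift_mem : ∀ {a : C}, a ∈ S → a⟦(-1 : ℤ)⟧ ∈ S
  ext₂ : ∀ {a e b : C} (f : a ⟶ e) (g : e ⟶ b) (h : b ⟶ a⟦(1 : ℤ)⟧),
    (Triangle.mk f g h ∈ distTriang C) → a ∈ S → b ∈ S → e ∈ S

/-- A thick subcategory: a triangulated subcategory closed under direct summands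
(equivalently, retracts). -/
structure IsThickSubcat (S : Set C) extends IsTriangulatedSubcat S : Prop where
  mem_of_retract : ∀ {a s : C}, s ∈ S → (∃ (i : a ⟶ s) (p : s ⟶ a), i ≫ p = 𝟙 a) → a ∈ S

/-- `(U, V)` is a stable t-structure in the (triangulated sub)category whose class of
objects is `S`: both are triangulated subcategories contained in `S`, `Hom(U, V) = 0`
and `U * V = S`. -/
structure IsStableTStructureIn (S U V : Set C) : Prop where
  subsetU : U ⊆ S
  subsetV : V ⊆ S
  triU : IsTriangulatedSubcat U
  triV : IsTriangulatedSubcat V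
  hom_zero : ∀ {u v : C}, u ∈ U → v ∈ V → ∀ f : u ⟶ v, f = 0
  star_eq : star U V = S

lemma IsTriangulatedSubcat.shift_all {S : Set C} (hS : IsTriangulatedSubcat S) (a : C) (n : ℤ)
    (ha : a ∈ S) : a⟦n⟧ ∈ S := by
  induction n using Int.induction_on with
  | zero => exact hS.mem_of_iso ((shiftFunctorZero C ℤ).app a).symm ha
  | succ i hi =>
      exact hS.mem_of_iso ((shiftFunctorAdd' C (i : ℤ) 1 ((i : ℤ) + 1) rfl).app a).symm
        (hS.shift_mem hi)
  | pred i hi =>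
      exact hS.mem_of_iso
        ((shiftFunctorAdd' C (-(i : ℤ)) (-1) (-(i : ℤ) - 1) (by ring)).app a).symm
        (hS.unshift_mem hi)

/-- The Mathlib `Triangulated.Subcategory` associated to a class of objects satisfying
`IsTriangulatedSubcat`. -/
def IsTriangulatedSubcat.toSubcategory {S : Set C} (hS : IsTriangulatedSubcat S) :
    ObjectProperty C :=
  fun a => a ∈ S

instance IsTriangulatedSubcat.toSubcategory_isTriangulated {S : Set C}
    (hS : IsTriangulatedSubcat S) : hS.toSubcategory.IsTriangulated where
  exists_zero := ⟨0, isZero_zero _, hS.zero_mem⟩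
  isStableUnderShiftBy n := ⟨fun a ha => hS.shift_all a n ha⟩
  ext₂' T hT h₁ h₃ :=
    ObjectProperty.le_isoClosure _ _ (hS.ext₂ T.mor₁ T.mor₂ T.mor₃ hT h₁ h₃)

lemma IsTriangulatedSubcat.inter {X Y : Set C} (hX : IsTriangulatedSubcat X)
    (hY : IsTriangulatedSubcat Y) : IsTriangulatedSubcat (X ∩ Y) where
  zero_mem := ⟨hX.zero_mem, hY.zero_mem⟩
  mem_of_iso := fun e h => ⟨hX.mem_of_iso e h.1, hY.mem_of_iso e h.2⟩
  shift_mem := fun h => ⟨hX.shift_mem h.1, hY.shift_mem h.2⟩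
  unshift_mem := fun h => ⟨hX.unshift_mem h.1, hY.unshift_mem h.2⟩
  ext₂ := fun f g h hT ha hb => ⟨hX.ext₂ f g h hT ha.1 hb.1, hY.ext₂ f g h hT ha.2 hb.2⟩

/-- The Verdier quotient of `C` by the triangulated subcategory `S`. -/
abbrev VerdierQuotient {S : Set C} (hS : IsTriangulatedSubcat S) : Type _ :=
  hS.toSubcategory.trW.Localization

/-- The Verdier quotient functor. -/
noncomputable abbrev Vq {S : Set C} (hS : IsTriangulatedSubcat S) : C ⥤ VerdierQuotient hS :=
  hS.toSubcategory.trW.Q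

/-- The essential image of a class of objects under a functor (the closure under
isomorphisms of the image). -/
def QSet {D : Type*} [Category D] (L : C ⥤ D) (S : Set C) : Set D :=
  {d | ∃ s ∈ S, Nonempty (L.obj s ≅ d)}

/-- The right perpendicular class `X^⊥`. -/
def rightPerp (X : Set C) : Set C := {t | ∀ {x : C}, x ∈ X → ∀ f : x ⟶ t, f = 0}

/-- The left perpendicular class `^⊥X`. -/
def leftPerp (X : Set C) : Set C := {t | ∀ {x : C}, x ∈ X → ∀ f : t ⟶ x, f = 0}

namespace IsTriangulatedSubcat

variable {S : Set C} (hS : IsTriangulatedSubcat S)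
include hS

lemma mem₁_of_distTriang {T : Triangle C} (hT : T ∈ distTriang C) (h₂ : T.obj₂ ∈ S)
    (h₃ : T.obj₃ ∈ S) : T.obj₁ ∈ S :=
  hS.ext₂ _ _ _ (inv_rot_of_distTriang _ hT) (hS.unshift_mem h₃) h₂

lemma mem₃_of_distTriang {T : Triangle C} (hT : T ∈ distTriang C) (h₁ : T.obj₁ ∈ S)
    (h₂ : T.obj₂ ∈ S) : T.obj₃ ∈ S :=
  hS.ext₂ _ _ _ (rot_of_distTriang _ hT) h₂ (hS.shift_mem h₁)

end IsTriangulatedSubcat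

section Star

variable {X Y : Set C}

lemma subset_star_left (hY : (0 : C) ∈ Y) : X ⊆ star X Y :=
  fun x hx => ⟨x, 0, hx, hY, 𝟙 x, 0, 0, contractible_distinguished x⟩

lemma subset_star_right (hX : (0 : C) ∈ X) : Y ⊆ star X Y :=
  fun y hy => ⟨0, y, hX, hy, 0, 𝟙 y, 0, contractible_distinguished₁ y⟩

lemma obj₃_mem_star_of_distTriang (hX : (0 : C) ∈ X) (hY : (0 : C) ∈ Y)
    (hXY : IsTriangulatedSubcat (star X Y)) {T : Triangle C} (hT : T ∈ distTriang C)
    (h₁ : T.obj₁ ∈ X) (h₂ : T.obj₂ ∈ Y) : T.obj₃ ∈ star X Y :=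
  hXY.mem₃_of_distTriang hT (subset_star_left hY h₁) (subset_star_right hX h₂)

end Star

lemma _root_.CategoryTheory.Functor.map_eq_zero_of_comp_eq_zero {C D : Type*} [Category C]
    [Category D] [HasZeroMorphisms C] [HasZeroMorphisms D] (L : C ⥤ D)
    [L.PreservesZeroMorphisms] {x y y' : C} {a : x ⟶ y} {b : y ⟶ y'} [IsIso (L.map b)]
    (hab : a ≫ b = 0) : L.map a = 0 := by
  rw [← cancel_mono (L.map b), ← L.map_comp, hab, L.map_zero, zero_comp]

variable [IsTriangulated C]

lemma exists_trW_inter_comp_eq_zero {X Y : Set C} (hX : IsTriangulatedSubcat X)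
    (hY : IsTriangulatedSubcat Y) (hXY : IsTriangulatedSubcat (star X Y)) {x y : C}
    (hx : x ∈ X) (hy : y ∈ Y) (a : x ⟶ y) :
    ∃ (y₁ : C) (b : y ⟶ y₁), (hX.inter hY).toSubcategory.trW b ∧ a ≫ b = 0 := by
  obtain ⟨c, β, γ, hTa⟩ := distinguished_cocone_triangle a
  have hc : c ∈ star X Y := obj₃_mem_star_of_distTriang hX.zero_mem hY.zero_mem hXY hTa hx hy
  obtain ⟨x₁, y₁, hx₁, hy₁, u, v, w, hTc⟩ := hc
  obtain ⟨z, g, h, hTb⟩ := distinguished_cocone_triangle (β ≫ v)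
  have oct := someOctahedron rfl (rot_of_distTriang _ hTa) (rot_of_distTriang _ hTc) hTb
  have hzX : z ∈ X := hX.ext₂ _ _ _ oct.mem (hX.shift_mem hx) (hX.shift_mem hx₁)
  have hzY : z ∈ Y := hY.mem₃_of_distTriang hTb hy hy₁
  refine ⟨y₁, β ≫ v, ⟨z, g, h, hTb, hzX, hzY⟩, ?_⟩
  have haβ : a ≫ β = 0 := comp_distTriang_mor_zero₁₂ _ hTa
  rw [reassoc_of% haβ, zero_comp]

/-- If `X`, `Y` are thick subcategories of `C` such that `X * Y` is a triangulated
subcategory, and `Q : C ⥤ C/(X ∩ Y)` is the Verdier quotient functor, then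
`Hom(Q(x), Q(y)) = 0` for all `x ∈ X`, `y ∈ Y`. -/
theorem statement2 {X Y : Set C} (hX : IsThickSubcat X) (hY : IsThickSubcat Y)
    (hXY : IsTriangulatedSubcat (star X Y)) :
    ∀ {x y : C}, x ∈ X → y ∈ Y →
      ∀ f : (Vq (hX.toIsTriangulatedSubcat.inter hY.toIsTriangulatedSubcat)).obj x ⟶ (Vq (hX.toIsTriangulatedSubcat.inter hY.toIsTriangulatedSubcat)).obj y, f = 0 := by
  intro x y hx hy f
  set W := (hX.toIsTriangulatedSubcat.inter hY.toIsTriangulatedSubcat).toSubcategory.trW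
  obtain ⟨φ, hφ⟩ := Localization.exists_rightFraction W.Q W f
  obtain ⟨z, g, h, hTs, hz⟩ := φ.hs
  have hx' : φ.X' ∈ X := hX.mem₁_of_distTriang hTs hx hz.1
  obtain ⟨y₁, b, hb, hab⟩ := exists_trW_inter_comp_eq_zero hX.toIsTriangulatedSubcat
    hY.toIsTriangulatedSubcat hXY hx' hy φ.f
  have : IsIso (W.Q.map b) := Localization.inverts W.Q W b hb
  have : IsIso (W.Q.map φ.s) := Localization.inverts W.Q W φ.s φ.hs
  rw [← cancel_epi (W.Q.map φ.s), hφ, φ.map_s_comp_map, W.Q.map_eq_zero_of_comp_eq_zero hab,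
    comp_zero]

end Paper
end

section
/- Let T be a triangulated category, let X be a triangulated subcategory of T, and set F = X * X^⊥, G = (^⊥X) * X, and U = F ∩ G. Then U is a triangulated subcategory of T. -/
namespace Paper

open CategoryTheory Limits Triangulated Pretriangulated ZeroObject

universe w v u

variable {C : Type u} [Category.{v} C] [HasZeroObject C] [Preadditive C] [HasShift C ℤ]
  [∀ n : ℤ, (shiftFunctor C n).Additive] [Pretriangulated C]

/-!
If `Hom(A, B) = 0` for triangulated subcategories `A` and `B`, then every triangle
`B → E → A → B⟦1⟧` splits, so `B * A ⊆ A * B`. Together with the associativity of `*`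
(the octahedral axiom) and `A * A ⊆ A`, `B * B ⊆ B` this gives
`(A * B) * (A * B) = A * ((B * A) * B) ⊆ A * ((A * B) * B) ⊆ A * B`, so `A * B` is again
triangulated. Apply this to the pairs `(X, X^⊥)` and `(^⊥X, X)` and intersect.
-/

section ExtensionProduct

open ObjectProperty

variable (P Q : ObjectProperty C)

lemma extensionProduct_swap_le [Q.IsStableUnderShift ℤ]
    (hPQ : ∀ ⦃X Y : C⦄ (f : X ⟶ Y), P X → Q Y → f = 0) :
    extensionProduct Q P ≤ extensionProduct P Q := by
  rintro X ⟨Y, Z, f, g, h, hT, hY, hZ⟩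
  obtain ⟨e, -, -⟩ :=
    exists_iso_binaryBiproduct_of_distTriang _ hT (hPQ h hZ (Q.le_shift 1 _ hY))
  exact (extensionProduct P Q).prop_of_iso (biprod.braiding Z Y ≪≫ e.symm)
    ⟨_, _, _, _, _, binaryBiproductTriangle_distinguished Z Y, hZ, hY⟩

variable [IsTriangulated C]

lemma extensionProduct_extensionProduct_le [P.IsTriangulatedClosed₂]
    [P.IsClosedUnderIsomorphisms] [Q.IsTriangulatedClosed₂] [Q.IsClosedUnderIsomorphisms]
    [Q.IsStableUnderShift ℤ] (hPQ : ∀ ⦃X Y : C⦄ (f : X ⟶ Y), P X → Q Y → f = 0) :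
    extensionProduct (extensionProduct P Q) (extensionProduct P Q) ≤ extensionProduct P Q :=
  have hP : extensionProduct P P ≤ P :=
    extensionProduct_le_of_isTriangulatedClosed₂ le_rfl le_rfl
  have hQ : extensionProduct Q Q ≤ Q :=
    extensionProduct_le_of_isTriangulatedClosed₂ le_rfl le_rfl
  calc extensionProduct (extensionProduct P Q) (extensionProduct P Q)
      = extensionProduct P (extensionProduct (extensionProduct Q P) Q) := by
        rw [extensionProduct_assoc, extensionProduct_assoc]
    _ ≤ extensionProduct P (extensionProduct (extensionProduct P Q) Q) :=
        monotone_extensionProduct_right _ <|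
          monotone_extensionProduct_left _ (extensionProduct_swap_le P Q hPQ)
    _ = extensionProduct P (extensionProduct P (extensionProduct Q Q)) := by
        rw [extensionProduct_assoc]
    _ ≤ extensionProduct P (extensionProduct P Q) :=
        monotone_extensionProduct_right _ (monotone_extensionProduct_right _ hQ)
    _ = extensionProduct (extensionProduct P P) Q := (extensionProduct_assoc _ _ _).symm
    _ ≤ extensionProduct P Q := monotone_extensionProduct_left _ hP

lemma isTriangulated_extensionProduct [P.IsTriangulated] [P.IsClosedUnderIsomorphisms]
    [Q.IsTriangulated] [Q.IsClosedUnderIsomorphisms]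
    (hPQ : ∀ ⦃X Y : C⦄ (f : X ⟶ Y), P X → Q Y → f = 0) :
    (extensionProduct P Q).IsTriangulated where
  exists_zero :=
    let ⟨Z, hZ, hP⟩ := P.exists_prop_of_containsZero
    ⟨Z, hZ, le_extensionProduct_left Q Z hP⟩
  toIsTriangulatedClosed₂ := .mk' fun _ hT h₁ h₃ =>
    extensionProduct_extensionProduct_le P Q hPQ _ ⟨_, _, _, _, _, hT, h₁, h₃⟩

end ExtensionProduct

lemma IsTriangulatedSubcat.isClosedUnderIsomorphisms {S : Set C}
    (hS : IsTriangulatedSubcat S) :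
    ObjectProperty.IsClosedUnderIsomorphisms (· ∈ S) where
  of_iso e h := hS.mem_of_iso e h

lemma IsTriangulatedSubcat.isTriangulated {S : Set C} (hS : IsTriangulatedSubcat S) :
    ObjectProperty.IsTriangulated (· ∈ S) := by
  have := hS.isClosedUnderIsomorphisms
  exact
  { exists_zero := ⟨0, isZero_zero C, hS.zero_mem⟩
    isStableUnderShiftBy n := ⟨fun a ha => hS.shift_all a n ha⟩
    toIsTriangulatedClosed₂ := .mk' fun T hT h₁ h₃ => hS.ext₂ T.mor₁ T.mor₂ T.mor₃ hT h₁ h₃ }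

lemma isTriangulatedSubcat_setOf (P : ObjectProperty C) [P.IsTriangulated]
    [P.IsClosedUnderIsomorphisms] : IsTriangulatedSubcat {c | P c} where
  zero_mem := P.prop_of_isZero (isZero_zero C)
  mem_of_iso e h := P.prop_of_iso e h
  shift_mem h := P.le_shift 1 _ h
  unshift_mem h := P.le_shift (-1) _ h
  ext₂ _ _ _ hT ha hb := P.ext_of_isTriangulatedClosed₂ _ hT ha hb

lemma star_eq_setOf_extensionProduct (A B : Set C) :
    star A B = {c | ObjectProperty.extensionProduct (· ∈ A) (· ∈ B) c} :=
  Set.ext fun _ => ⟨fun ⟨x, y, hx, hy, f, g, h, hT⟩ => ⟨x, y, f, g, h, hT, hx, hy⟩,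
    fun ⟨x, y, f, g, h, hT, hx, hy⟩ => ⟨x, y, hx, hy, f, g, h, hT⟩⟩

lemma isTriangulatedSubcat_rightPerp {X : Set C} (hX : IsTriangulatedSubcat X) :
    IsTriangulatedSubcat (rightPerp X) := by
  have := hX.isTriangulated
  have hperp : rightPerp X = {c | ObjectProperty.rightOrthogonal (· ∈ X) c} :=
    Set.ext fun _ => ⟨fun h _ f hx => h hx f, fun h _ hx f => h f hx⟩
  rw [hperp]
  exact isTriangulatedSubcat_setOf _

lemma isTriangulatedSubcat_leftPerp {X : Set C} (hX : IsTriangulatedSubcat X) :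
    IsTriangulatedSubcat (leftPerp X) := by
  have := hX.isTriangulated
  have hperp : leftPerp X = {c | ObjectProperty.leftOrthogonal (· ∈ X) c} :=
    Set.ext fun _ => ⟨fun h _ f hx => h hx f, fun h _ hx f => h f hx⟩
  rw [hperp]
  exact isTriangulatedSubcat_setOf _

variable [IsTriangulated C]

lemma isTriangulatedSubcat_star {A B : Set C} (hA : IsTriangulatedSubcat A)
    (hB : IsTriangulatedSubcat B) (hAB : ∀ {a b : C}, a ∈ A → b ∈ B → ∀ f : a ⟶ b, f = 0) :
    IsTriangulatedSubcat (star A B) := by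
  have := hA.isTriangulated
  have := hA.isClosedUnderIsomorphisms
  have := hB.isTriangulated
  have := hB.isClosedUnderIsomorphisms
  rw [star_eq_setOf_extensionProduct]
  have := isTriangulated_extensionProduct _ _ fun _ _ f ha hb => hAB ha hb f
  exact isTriangulatedSubcat_setOf _

/-- Let `X` be a triangulated subcategory of `C` and set `F = X * X^⊥`, `G = (^⊥X) * X`
and `U = F ∩ G`.  Then `U` is a triangulated subcategory of `C`. -/
theorem statement14 {X : Set C} (hX : IsTriangulatedSubcat X) :
    IsTriangulatedSubcat (star X (rightPerp X) ∩ star (leftPerp X) X) :=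
  IsTriangulatedSubcat.inter
    (isTriangulatedSubcat_star hX (isTriangulatedSubcat_rightPerp hX) fun hx hy f =>
      hy hx f)
    (isTriangulatedSubcat_star (isTriangulatedSubcat_leftPerp hX) hX fun hy hx f => hy hx f)

end Paper
end
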